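/- In the abstract population protocol model with parallel (matching) scheduler, suppose protocol A stably computes the parity predicate (all n nodes start in the same state q₁, and every fair execution stabilizes to output n mod 2). Then the symmetry of A is less than 2^(|Q|−1); that is, for infinitely many n there is no execution on the all-q₁ initial configuration of size n in which every configuration up to stability has all present states with multiplicity at least 2^(|Q|−1). -/

import Mathlib

/-- One parallel step of a population protocol with transition function `δ`:
    the scheduler selects a nonempty matching (a multiset of ordered pairs of
    distinct individuals), and each selected pair interacts via `δ` while the
    remaining individuals are unchanged. -/
def PPStep {Q : Type*} [DecidableEq Q] (δ : Q → Q → Q × Q)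
    (C C' : Multiset Q) : Prop :=
  ∃ M : Multiset (Q × Q), M ≠ 0 ∧
    M.map Prod.fst + M.map Prod.snd ≤ C ∧
    C' = C - (M.map Prod.fst + M.map Prod.snd)
        + M.map (fun p => (δ p.1 p.2).1) + M.map (fun p => (δ p.1 p.2).2)

/-- Reachability: the reflexive-transitive closure of the one-step relation. -/
def PPReach {Q : Type*} [DecidableEq Q] (δ : Q → Q → Q × Q) :
    Multiset Q → Multiset Q → Prop :=
  Relation.ReflTransGen (PPStep δ)

/-- A fair infinite execution: every step is legal, and any configuration
    reachable in one step from a configuration occurring infinitely often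
    itself occurs infinitely often. -/
def FairExec {Q : Type*} [DecidableEq Q] (δ : Q → Q → Q × Q)
    (e : ℕ → Multiset Q) : Prop :=
  (∀ i, PPStep δ (e i) (e (i + 1))) ∧
  ∀ c c', PPStep δ c c' → (∀ i, ∃ j, i ≤ j ∧ e j = c) →
    (∀ i, ∃ j, i ≤ j ∧ e j = c')

/-!
Suppose the odd configuration `S = C_stable` is reached from `n • {q₁}` along an execution all of
whose configurations have multiplicities at least `2^(|Q|-1)`. Running two copies of that execution
side by side reaches `S + S` from `2n • {q₁}`, and a fair execution through `S + S` (walk into a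
bottom strongly connected component of the finite reachability graph, then cycle through all of it)
eventually produces a state `q₀` of output `0`. The states producible from `supp S` are obtained by
at most `|Q| - 1` rounds of pairwise interactions, each round at most doubling the number of tokens
needed, so `q₀` is produced from a sub-configuration with at most `2^(|Q|-1)` tokens of `S`. Such a
sub-configuration fits inside `S` itself, so `q₀` is producible from `S`, contradicting the
stability of `S` with output `1`.
-/

open Filter

theorem Finset.isFixedPt_iterate_card_sub_one {α : Type*} [Fintype α] {f : Finset α → Finset α}
    (hf : ∀ s, s ⊆ f s) {s : Finset α} (hs : s.Nonempty) :
    Function.IsFixedPt f (f^[Fintype.card α - 1] s) := by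
  have hgrow : ∀ i, Function.IsFixedPt f (f^[i] s) ∨ s.card + i ≤ (f^[i] s).card := by
    intro i
    induction i with
    | zero => simp
    | succ i ih =>
      rw [Function.iterate_succ_apply']
      by_cases hfix : Function.IsFixedPt f (f^[i] s)
      · exact .inl (hfix.symm ▸ hfix)
      · have := Finset.card_lt_card ((hf _).ssubset_of_ne (Ne.symm hfix))
        have := ih.resolve_left hfix
        omega
  refine (hgrow _).elim id fun h => ?_
  have hu : f^[Fintype.card α - 1] s = Finset.univ :=
    Finset.eq_univ_of_card _ (le_antisymm (Finset.card_le_univ _) (by have := hs.card_pos; omega))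
  rw [Function.IsFixedPt, hu]
  exact Finset.univ_subset_iff.mp (hf _)

theorem Multiset.le_of_card_le_of_le_count {α : Type*} [DecidableEq α] {s t : Multiset α} {k : ℕ}
    (hs : card s ≤ k) (ht : ∀ x ∈ s, k ≤ t.count x) : s ≤ t :=
  Multiset.le_iff_count.mpr fun x => by
    by_cases hx : x ∈ s
    · exact (Multiset.count_le_card x s).trans (hs.trans (ht x hx))
    · simp [Multiset.count_eq_zero_of_notMem hx]

theorem List.IsChain.cons_append_singleton_trans {α : Type*} {r : α → α → Prop} {a b c : α}
    {l₁ l₂ : List α} (h₁ : (a :: l₁ ++ [b]).IsChain r) (h₂ : (b :: l₂ ++ [c]).IsChain r) :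
    (a :: (l₁ ++ b :: l₂) ++ [c]).IsChain r := by
  simpa using h₁.append_overlap (l₂ := [b]) (l₃ := l₂ ++ [c]) h₂ (by simp)

namespace Relation

variable {α : Type*} {r : α → α → Prop}

theorem reflTransGen_of_walk {e : ℕ → α} (he : ∀ i, r (e i) (e (i + 1))) {i j : ℕ}
    (hij : i ≤ j) : ReflTransGen r (e i) (e j) :=
  (reflTransGen_of_succ_of_le (fun i j => r (e i) (e j)) (fun k _ => by simpa using he k)
    hij).lift e fun _ _ h => h

theorem exists_reflTransGen_forall_reflTransGen_back {a : α}
    (ha : {b | ReflTransGen r a b}.Finite) :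
    ∃ d, ReflTransGen r a d ∧ ∀ x, ReflTransGen r d x → ReflTransGen r x d := by
  obtain ⟨d, had, hmin⟩ := Set.exists_min_image {b | ReflTransGen r a b}
    (fun b => {c | ReflTransGen r b c}.ncard) ha ⟨a, .refl⟩
  refine ⟨d, had, fun x hdx => ?_⟩
  have hsub : {c | ReflTransGen r x c} ⊆ {c | ReflTransGen r d c} := fun c hxc => hdx.trans hxc
  have heq := Set.eq_of_subset_of_ncard_le hsub (hmin x (had.trans hdx))
    (ha.subset fun c hdc => had.trans hdc)
  exact heq.symm.subset (ReflTransGen.refl : ReflTransGen r d d)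

theorem TransGen.exists_isChain {a b : α} (h : TransGen r a b) :
    ∃ l, (a :: l ++ [b]).IsChain r := by
  induction h with
  | single h => exact ⟨[], List.isChain_pair.mpr h⟩
  | @tail x y _ hxy ih =>
    obtain ⟨l, hl⟩ := ih
    refine ⟨l ++ [x], ?_⟩
    simpa [List.isChain_append] using ⟨hl, hxy⟩

theorem exists_isChain_cycle_through {d : α} (hd : TransGen r d d) :
    ∀ T : List α, (∀ x ∈ T, TransGen r d x ∧ TransGen r x d) →
      ∃ l, (d :: l ++ [d]).IsChain r ∧ ∀ x ∈ T, x ∈ l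
  | [], _ => (hd.exists_isChain).imp fun _ hl => ⟨hl, by simp⟩
  | x :: T, hT => by
    obtain ⟨l, hl, hTl⟩ := exists_isChain_cycle_through hd T fun y hy => hT y (.tail x hy)
    obtain ⟨l₁, hl₁⟩ := (hT x (.head ..)).1.exists_isChain
    obtain ⟨l₂, hl₂⟩ := (hT x (.head ..)).2.exists_isChain
    refine ⟨l₁ ++ x :: l₂ ++ d :: l, ?_, ?_⟩
    · exact (hl₁.cons_append_singleton_trans hl₂).cons_append_singleton_trans hl
    · intro y hy
      rcases List.mem_cons.mp hy with rfl | hy <;> simp [hTl y, *]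

def IsFairWalk (r : α → α → Prop) (e : ℕ → α) : Prop :=
  (∀ i, r (e i) (e (i + 1))) ∧
    ∀ c c', r c c' → (∃ᶠ i in atTop, e i = c) → ∃ᶠ i in atTop, e i = c'

theorem isFairWalk_getElem_mod {d : α} {l : List α} (hl : (d :: l ++ [d]).IsChain r)
    (hclosed : ∀ x ∈ d :: l, ∀ y, r x y → y ∈ d :: l) :
    IsFairWalk r fun i => (d :: l)[i % (l.length + 1)]'(Nat.mod_lt _ l.length.succ_pos) := by
  have hget : ∀ j (hj : j < l.length + 2), (d :: l ++ [d])[j]'(by simp; omega) =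
      (d :: l)[j % (l.length + 1)]'(Nat.mod_lt _ l.length.succ_pos) := by
    intro j hj
    rcases (show j < l.length + 1 ∨ j = l.length + 1 by omega) with h | rfl
    · simp only [Nat.mod_eq_of_lt h]
      exact List.getElem_append_left (by simpa using h)
    · simp
  refine ⟨fun i => ?_, fun c c' hcc' hc => ?_⟩
  · have hi : i % (l.length + 1) < l.length + 1 := Nat.mod_lt i l.length.succ_pos
    have h := hl.getElem (i % (l.length + 1)) (by simpa using hi)
    rw [hget _ (by omega), hget _ (by omega)] at h
    simpa only [Nat.mod_mod, Nat.mod_add_mod] using h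
  · obtain ⟨i, rfl⟩ := hc.exists
    obtain ⟨k, hk, rfl⟩ := List.getElem_of_mem (hclosed _ (List.getElem_mem _) c' hcc')
    refine frequently_atTop.mpr fun a => ⟨k + a * (l.length + 1), by nlinarith, ?_⟩
    have hk' : k < l.length + 1 := by simpa using hk
    simp only [Nat.add_mul_mod_self_right, Nat.mod_eq_of_lt hk']

theorem IsFairWalk.cons {e : ℕ → α} (he : IsFairWalk r e) {a : α} (ha : r a (e 0)) :
    IsFairWalk r fun | 0 => a | i + 1 => e i := by
  have hshift : ∀ c, (∃ᶠ i in atTop, (fun | 0 => a | i + 1 => e i : ℕ → α) i = c) ↔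
      ∃ᶠ i in atTop, e i = c := fun c => by
    conv_lhs => rw [← map_add_atTop_eq_nat 1]
    rw [frequently_map]
  refine ⟨fun | 0 => ha | i + 1 => he.1 i, fun c c' hcc' hc => ?_⟩
  rw [hshift] at hc ⊢
  exact he.2 c c' hcc' hc

theorem IsFairWalk.exists_of_reflTransGen {e : ℕ → α} (he : IsFairWalk r e) {a : α}
    (ha : ReflTransGen r a (e 0)) : ∃ e', IsFairWalk r e' ∧ e' 0 = a ∧ ∃ s, e' s = e 0 := by
  induction ha using ReflTransGen.head_induction_on with
  | refl => exact ⟨e, he, rfl, 0, rfl⟩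
  | head hab _ ih =>
    obtain ⟨e', he', he'0, s, hs⟩ := ih
    exact ⟨_, he'.cons (he'0 ▸ hab), rfl, s + 1, hs⟩

theorem exists_isFairWalk_of_forall_reflTransGen_back {d : α}
    (hfin : {x | ReflTransGen r d x}.Finite) (hback : ∀ x, ReflTransGen r d x → ReflTransGen r x d)
    {y : α} (hy : r d y) : ∃ e, IsFairWalk r e ∧ e 0 = d := by
  have hdx : ∀ x, ReflTransGen r d x → TransGen r d x :=
    fun x hx => .head' hy ((hback y (.single hy)).trans hx)
  obtain ⟨l, hl, hreach⟩ := exists_isChain_cycle_through (hdx d .refl) hfin.toFinset.toList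
    fun x hx => by
      rw [Finset.mem_toList, Set.Finite.mem_toFinset] at hx
      exact ⟨hdx x hx, TransGen.trans_right (hback x hx) (hdx d .refl)⟩
  have hmem : ∀ x, x ∈ d :: l ↔ ReflTransGen r d x := by
    refine fun x => ⟨fun hx => ?_, fun hx => List.mem_cons_of_mem d (hreach x (by simpa using hx))⟩
    rcases List.mem_cons.mp hx with rfl | hx
    · exact .refl
    · exact hl.cons_induction _ (l ++ [d]) (fun _ _ h hx => hx.tail h) .refl x (by simp [hx])
  refine ⟨_, isFairWalk_getElem_mod hl fun x hx z hxz => ?_, by simp⟩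
  exact (hmem z).mpr (((hmem x).mp hx).tail hxz)

theorem exists_isFairWalk_of_reflTransGen {a b : α} (hfin : {x | ReflTransGen r a x}.Finite)
    (hserial : ∀ x, ReflTransGen r a x → ∃ y, r x y) (hab : ReflTransGen r a b) :
    ∃ e, IsFairWalk r e ∧ e 0 = a ∧ ∃ s, e s = b := by
  obtain ⟨d, hbd, hback⟩ := exists_reflTransGen_forall_reflTransGen_back
    (hfin.subset fun x hbx => hab.trans hbx)
  obtain ⟨y, hy⟩ := hserial d (hab.trans hbd)
  obtain ⟨e, he, rfl⟩ := exists_isFairWalk_of_forall_reflTransGen_back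
    (hfin.subset fun x hdx => (hab.trans hbd).trans hdx) hback hy
  obtain ⟨e', he', rfl, -⟩ := he.exists_of_reflTransGen hbd
  exact he'.exists_of_reflTransGen hab

end Relation

section PopulationProtocol

open Relation

variable {Q : Type*} [DecidableEq Q] {δ : Q → Q → Q × Q}

theorem PPStep.card_eq {C C' : Multiset Q} (h : PPStep δ C C') : C'.card = C.card := by
  obtain ⟨M, -, hle, rfl⟩ := h
  have := Multiset.card_le_card hle
  simp only [Multiset.card_add, Multiset.card_sub hle, Multiset.card_map] at *
  omega

theorem PPReach.card_eq {C C' : Multiset Q} (h : PPReach δ C C') : C'.card = C.card := by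
  induction h with
  | refl => rfl
  | tail _ hstep ih => rw [hstep.card_eq, ih]

theorem PPStep.add_right {C C' : Multiset Q} (h : PPStep δ C C') (X : Multiset Q) :
    PPStep δ (C + X) (C' + X) := by
  obtain ⟨M, hM, hle, rfl⟩ := h
  refine ⟨M, hM, hle.trans (Multiset.le_add_right _ _), ?_⟩
  rw [← tsub_add_eq_add_tsub hle]
  ac_rfl

theorem PPReach.add_right {C C' : Multiset Q} (h : PPReach δ C C') (X : Multiset Q) :
    PPReach δ (C + X) (C' + X) :=
  h.lift (· + X) fun _ _ hs => hs.add_right X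

theorem PPReach.add {C C' D D' : Multiset Q} (hC : PPReach δ C C') (hD : PPReach δ D D') :
    PPReach δ (C + D) (C' + D') :=
  (hC.add_right D).trans (by rw [add_comm C', add_comm C']; exact hD.add_right C')

theorem ppStep_of_pair_le {C : Multiset Q} {a b : Q} (h : {a} + {b} ≤ C) :
    PPStep δ C (C - ({a} + {b}) + {(δ a b).1} + {(δ a b).2}) :=
  ⟨{(a, b)}, Multiset.singleton_ne_zero _, by simpa using h, by simp⟩

theorem exists_ppStep_of_two_le_card {C : Multiset Q} (h : 2 ≤ C.card) : ∃ C', PPStep δ C C' := by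
  obtain ⟨a, C₁, rfl, h₁⟩ := Multiset.card_eq_succ_iff.mp (show C.card = C.card - 1 + 1 by omega)
  obtain ⟨b, C₂, rfl, -⟩ := Multiset.card_eq_succ_iff.mp (show C₁.card = C₁.card - 1 + 1 by omega)
  exact ⟨_, ppStep_of_pair_le (a := a) (b := b) (by simp)⟩

theorem finite_setOf_ppReach [Fintype Q] (C : Multiset Q) : {D | PPReach δ C D}.Finite :=
  ((Set.finite_range fun s : Sym Q C.card => (s : Multiset Q))).subset
    fun D hD => ⟨⟨D, PPReach.card_eq hD⟩, rfl⟩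

theorem exists_fairExec_of_ppReach [Fintype Q] {C X : Multiset Q} (hC : 2 ≤ C.card)
    (hCX : PPReach δ C X) : ∃ e, FairExec δ e ∧ e 0 = C ∧ ∃ s, e s = X := by
  obtain ⟨e, ⟨hstep, hfair⟩, he0, hs⟩ := exists_isFairWalk_of_reflTransGen (finite_setOf_ppReach C)
    (fun D hD => exists_ppStep_of_two_le_card ((PPReach.card_eq hD).symm ▸ hC)) hCX
  exact ⟨e, ⟨hstep, by simpa only [Filter.frequently_atTop] using hfair⟩, he0, hs⟩

def expandStates (δ : Q → Q → Q × Q) (T : Finset Q) : Finset Q :=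
  T ∪ (T ×ˢ T).image (fun p => (δ p.1 p.2).1) ∪ (T ×ˢ T).image (fun p => (δ p.1 p.2).2)

theorem subset_expandStates (T : Finset Q) : T ⊆ expandStates δ T :=
  Finset.subset_union_left.trans Finset.subset_union_left

theorem PPReach.mem_of_expandStates_subset {F : Finset Q} (hF : expandStates δ F ⊆ F)
    {C D : Multiset Q} (h : PPReach δ C D) (hC : ∀ q ∈ C, q ∈ F) : ∀ q ∈ D, q ∈ F := by
  induction h with
  | refl => exact hC
  | tail _ hstep ih =>
    obtain ⟨M, -, hle, rfl⟩ := hstep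
    have hM : ∀ p ∈ M, p.1 ∈ F ∧ p.2 ∈ F := fun p hp =>
      ⟨ih _ (Multiset.mem_of_le hle (by simp [Multiset.mem_map_of_mem _ hp])),
        ih _ (Multiset.mem_of_le hle (by simp [Multiset.mem_map_of_mem _ hp]))⟩
    intro q hq
    simp only [Multiset.mem_add, Multiset.mem_map] at hq
    rcases hq with (hq | ⟨p, hp, rfl⟩) | ⟨p, hp, rfl⟩
    · exact ih q (Multiset.mem_of_le tsub_le_self hq)
    · exact hF (Finset.mem_union_left _ (Finset.mem_union_right _
        (Finset.mem_image_of_mem _ (Finset.mem_product.2 (hM p hp)))))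
    · exact hF (Finset.mem_union_right _
        (Finset.mem_image_of_mem _ (Finset.mem_product.2 (hM p hp))))

theorem exists_ppReach_of_mem_iterate_expandStates (T : Finset Q) :
    ∀ i, ∀ q ∈ (expandStates δ)^[i] T,
      ∃ L : Multiset Q, (∀ x ∈ L, x ∈ T) ∧ L.card ≤ 2 ^ i ∧ ∃ D, PPReach δ L D ∧ q ∈ D
  | 0, q, hq => ⟨{q}, by simpa using hq, by simp, {q}, .refl, by simp⟩
  | i + 1, q, hq => by
    have hpair : ∀ a ∈ (expandStates δ)^[i] T, ∀ b ∈ (expandStates δ)^[i] T,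
        ∃ L : Multiset Q, (∀ x ∈ L, x ∈ T) ∧ L.card ≤ 2 ^ (i + 1) ∧
          ∃ D, PPReach δ L D ∧ (δ a b).1 ∈ D ∧ (δ a b).2 ∈ D := by
      intro a ha b hb
      obtain ⟨La, hLaT, hLa, Da, hLDa, haD⟩ := exists_ppReach_of_mem_iterate_expandStates T i a ha
      obtain ⟨Lb, hLbT, hLb, Db, hLDb, hbD⟩ := exists_ppReach_of_mem_iterate_expandStates T i b hb
      have hab : {a} + {b} ≤ Da + Db :=
        add_le_add (Multiset.singleton_le.2 haD) (Multiset.singleton_le.2 hbD)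
      refine ⟨La + Lb, by simpa [or_imp, forall_and] using ⟨hLaT, hLbT⟩, by simp [pow_succ]; omega,
        _, (hLDa.add hLDb).tail (ppStep_of_pair_le hab), by simp, by simp⟩
    rw [Function.iterate_succ_apply'] at hq
    simp only [expandStates, Finset.mem_union, Finset.mem_image, Finset.mem_product] at hq
    rcases hq with (hq | ⟨⟨a, b⟩, ⟨ha, hb⟩, rfl⟩) | ⟨⟨a, b⟩, ⟨ha, hb⟩, rfl⟩
    · obtain ⟨L, hLT, hL, hLq⟩ := exists_ppReach_of_mem_iterate_expandStates T i q hq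
      exact ⟨L, hLT, hL.trans (Nat.pow_le_pow_right two_pos i.le_succ), hLq⟩
    · obtain ⟨L, hLT, hL, D, hLD, hD, -⟩ := hpair a ha b hb
      exact ⟨L, hLT, hL, D, hLD, hD⟩
    · obtain ⟨L, hLT, hL, D, hLD, -, hD⟩ := hpair a ha b hb
      exact ⟨L, hLT, hL, D, hLD, hD⟩

theorem exists_ppReach_mem_of_ppReach_add_self [Fintype Q] {S D : Multiset Q}
    (hS : ∀ q ∈ S, 2 ^ (Fintype.card Q - 1) ≤ S.count q) (hD : PPReach δ (S + S) D) {q : Q}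
    (hq : q ∈ D) : ∃ D', PPReach δ S D' ∧ q ∈ D' := by
  have hSne : S.toFinset.Nonempty := Multiset.toFinset_nonempty.2 fun h0 => by
    have hcard := hD.card_eq
    simp only [h0, add_zero, Multiset.card_zero, Multiset.card_eq_zero] at hcard
    simp [hcard] at hq
  have hfix := Finset.isFixedPt_iterate_card_sub_one (subset_expandStates (δ := δ)) hSne
  have hqF := hD.mem_of_expandStates_subset hfix.subset (fun x hx =>
    Function.id_le_iterate_of_id_le subset_expandStates _ _ (by simpa using hx)) q hq
  obtain ⟨L, hLS, hL, D', hLD', hqD'⟩ := exists_ppReach_of_mem_iterate_expandStates _ _ q hqF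
  have hLS' : L ≤ S := Multiset.le_of_card_le_of_le_count hL fun x hx =>
    hS x (Multiset.mem_toFinset.1 (hLS x hx))
  have hSD' := hLD'.add_right (S - L)
  rw [add_tsub_cancel_of_le hLS'] at hSD'
  exact ⟨_, hSD', Multiset.mem_add.2 (.inl hqD')⟩

end PopulationProtocol

/-- Impossibility of high symmetry for parity: if protocol `A = (δ, O)` stably
    computes the parity predicate (all `n` nodes start in state `q₁` and every
    fair execution stabilizes to output `n mod 2`), then for infinitely many `n`
    there is no finite execution on the all-`q₁` initial configuration of size
    `n` that reaches stability while every configuration along the way has all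
    present states of multiplicity at least `2^(|Q|−1)`; i.e., the symmetry of
    the protocol is less than `2^(|Q|−1)`. -/
theorem parity_low_symmetry {Q : Type*} [DecidableEq Q] [Fintype Q]
    (δ : Q → Q → Q × Q) (O : Q → Bool) (q₁ : Q)
    (hcomputes : ∀ n : ℕ, 1 ≤ n →
      ∀ e : ℕ → Multiset Q, e 0 = Multiset.replicate n q₁ → FairExec δ e →
        ∃ t, ∀ C', PPReach δ (e t) C' → ∀ q ∈ C',
          O q = decide (n % 2 = 1)) :
    {n : ℕ | ¬ ∃ (m : ℕ) (e : Fin (m + 1) → Multiset Q),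
        e 0 = Multiset.replicate n q₁ ∧
        (∀ i : Fin m, PPStep δ (e i.castSucc) (e i.succ)) ∧
        (∀ C', PPReach δ (e (Fin.last m)) C' → ∀ q ∈ C',
          O q = decide (n % 2 = 1)) ∧
        (∀ i, ∀ q ∈ e i, 2 ^ (Fintype.card Q - 1) ≤ (e i).count q)}.Infinite := by
  refine Set.infinite_of_injective_forall_mem (f := fun k => 2 * k + 1)
    (fun a b h => by simpa using h) fun k ⟨m, e, he0, hsteps, hstable, hsym⟩ => ?_
  set S := e (Fin.last m)
  have hS : PPReach δ (Multiset.replicate (2 * k + 1) q₁) S := by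
    have := List.relationReflTransGen_of_exists_isChain (List.ofFn e)
      (List.isChain_ofFn.2 fun i hi => hsteps ⟨i, by omega⟩) (by simp)
    simp only [List.head_ofFn, List.getLast_ofFn, Nat.add_sub_cancel, Fin.zero_eta, he0] at this
    exact this
  have hcard : S.card = 2 * k + 1 := by simpa using hS.card_eq
  obtain ⟨e', hfair, he'0, s, he's⟩ := exists_fairExec_of_ppReach
    (by rw [Multiset.card_add, Multiset.card_replicate]; omega) (hS.add hS)
  obtain ⟨t, ht⟩ := hcomputes (2 * (2 * k + 1)) (by omega) e'
    (by rw [he'0, ← Multiset.replicate_add, ← two_mul]) hfair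
  have hreach := fun {i j : ℕ} (hij : i ≤ j) => Relation.reflTransGen_of_walk hfair.1 hij
  obtain ⟨q, hq⟩ : ∃ q, q ∈ e' (max s t) := Multiset.card_pos_iff_exists_mem.1 (by
    rw [PPReach.card_eq (hreach (le_max_left s t)), he's]; simp; omega)
  obtain ⟨D, hSD, hqD⟩ := exists_ppReach_mem_of_ppReach_add_self (hsym _)
    (he's ▸ hreach (le_max_left s t)) hq
  have hodd : O q = true := by simpa using hstable D hSD q hqD
  have heven : O q = false := by simpa using ht _ (hreach (le_max_right s t)) q hq
  simp [hodd] at heven
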